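/- arXiv:1710.06257 — 4 statements merged into one kernel-verified Lean document; each statement's English description precedes it below -/
import Mathlib

section
/- Let U be the bilateral shift on ℓ²(ℤ) and U_r the weighted bilateral shift with U_r e_k = r·e_{k+1} for k < 0 and U_r e_k = e_{k+1} for k ≥ 0, where 0 < r < 1. Then U = ((1+r+r²)/((1+r)r))·U_r − (1/((1+r)r))·U_r U_r* U_r. -/
open scoped ComplexOrder

theorem shift_decomposition (r : ℝ) (hr0 : 0 < r) (hr1 : r < 1)
    (U Ur : lp (fun _ : ℤ => ℂ) 2 →L[ℂ] lp (fun _ : ℤ => ℂ) 2)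
    (e : ℤ → lp (fun _ : ℤ => ℂ) 2) (he : ∀ k, e k = lp.single 2 k (1 : ℂ))
    (hU : ∀ k : ℤ, U (e k) = e (k + 1))
    (hUr : ∀ k : ℤ, Ur (e k) = (if k < 0 then (r : ℂ) else 1) • e (k + 1)) :
    U = ((1 + r + r ^ 2) / ((1 + r) * r) : ℂ) • Ur
        - ((1 / ((1 + r) * r)) : ℂ) • (Ur ∘L (ContinuousLinearMap.adjoint Ur) ∘L Ur) := by
  have hr0' : (r : ℂ) ≠ 0 := by exact_mod_cast hr0.ne'
  have hr1' : (1 : ℂ) + r ≠ 0 := by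
    have : (1 : ℝ) + r ≠ 0 := by positivity
    exact_mod_cast this
  set w : ℤ → ℂ := fun k => if k < 0 then (r : ℂ) else 1 with hw
  have hconjw : ∀ k, (starRingEnd ℂ) (w k) = w k := by
    intro k
    simp only [hw]
    split_ifs <;> simp
  -- coordinates via inner products
  have hcoord : ∀ (x : lp (fun _ : ℤ => ℂ) 2) (j : ℤ),
      x j = inner (𝕜 := ℂ) (e j) x := by
    intro x j
    rw [he, lp.inner_single_left]
    simp [RCLike.inner_apply]
  have hinner_e : ∀ j k : ℤ, inner (𝕜 := ℂ) (e j) (e k) = if k = j then 1 else 0 := by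
    intro j k
    rw [← hcoord, he]
    by_cases h : k = j
    · subst h; simp [lp.single_apply]
    · simp [lp.single_apply, h, Ne.symm h]
  -- adjoint on basis vectors
  have hadj : ∀ k : ℤ, (ContinuousLinearMap.adjoint Ur) (e k) = w (k - 1) • e (k - 1) := by
    intro k
    apply lp.ext
    funext j
    rw [hcoord _ j, hcoord _ j]
    rw [ContinuousLinearMap.adjoint_inner_right, hUr j]
    rw [inner_smul_left, inner_smul_right, hinner_e, hinner_e, hconjw]
    by_cases h : k = j + 1
    · have h' : k - 1 = j := by omega
      simp [h, h']
    · have h' : ¬ (k - 1 = j) := by omega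
      simp [h, h']
  -- agreement of both sides on basis vectors
  set T := ((1 + r + r ^ 2) / ((1 + r) * r) : ℂ) • Ur
        - ((1 / ((1 + r) * r)) : ℂ) • (Ur ∘L (ContinuousLinearMap.adjoint Ur) ∘L Ur) with hT
  have hbasis : ∀ k : ℤ, U (e k) = T (e k) := by
    intro k
    have h1 : Ur (e k) = w k • e (k + 1) := hUr k
    have h2 : T (e k) =
        (((1 + r + r ^ 2) / ((1 + r) * r) : ℂ) * w k
          - (1 / ((1 + r) * r) : ℂ) * (w k * w k * w k)) • e (k + 1) := by
      rw [hT]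
      simp only [ContinuousLinearMap.sub_apply, ContinuousLinearMap.smul_apply,
        ContinuousLinearMap.comp_apply, ContinuousLinearMap.coe_comp', Function.comp_apply, h1,
        map_smul, hadj (k + 1), add_sub_cancel_right, h1, smul_smul, sub_smul]
    rw [hU k, h2]
    have hwk : ((1 + r + r ^ 2) / ((1 + r) * r) : ℂ) * w k
          - (1 / ((1 + r) * r) : ℂ) * (w k * w k * w k) = 1 := by
      simp only [hw]
      split_ifs
      · field_simp
        ring
      · field_simp
        ring
    rw [hwk, one_smul]
  -- conclude by density (every element is a sum of singles)

  refine ContinuousLinearMap.ext fun f => ?_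
  have hsum : HasSum (fun k : ℤ => lp.single 2 k (f k)) f :=
    lp.hasSum_single (by norm_num) f
  have hsum' : ∀ k : ℤ, lp.single 2 k (f k) = f k • e k := by
    intro k
    rw [he, ← lp.single_smul]
    congr 1
    simp
  have hU' : HasSum (fun k : ℤ => f k • U (e k)) (U f) := by
    have := (U.hasSum hsum)
    simpa [hsum', map_smul] using this
  have hT' : HasSum (fun k : ℤ => f k • T (e k)) (T f) := by
    have := (T.hasSum hsum)
    simpa [hsum', map_smul] using this
  refine hU'.unique ?_
  convert hT' using 2 with k
  rw [hbasis k]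
end

section
/- Let D_n be the finite-difference operator (D_n f)(k) = β(k+n) f(k) − β(k)·(μ(k+1)/μ(k))·f(k+1) acting in ℓ²(ℤ), with real β(k) > 0 and μ(k) ≠ 0. If h_n(k) := (1/μ(k))∏_{j=0}^{n−1}β(j+k) satisfies ∑_{k<0} |h_n(k)|² < ∞ (for all n ≤ n₀), then the truncated sequences h_n^N (equal to h_n for |k| ≤ N and 0 otherwise) satisfy D_n h_n^N → 0 in ℓ²(ℤ) as N → ∞ whenever ∑_k |h_{n+1}(k)|² < ∞; explicitly, (D_n h_n^N)(N) = h_{n+1}(N), (D_n h_n^N)(−N−1) = −h_{n+1}(−N−1), and (D_n h_n^N)(k) = 0 for all other k. -/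
open Filter

theorem truncated_kernel_approx (β : ℤ → ℝ) (hβ : ∀ k, 0 < β k)
    (μ : ℤ → ℂ) (hμ : ∀ k, μ k ≠ 0)
    (n n₀ : ℕ) (hn : 1 ≤ n) (hn₀ : n ≤ n₀)
    (h : ℕ → ℤ → ℂ)
    (hh : ∀ (m : ℕ) (k : ℤ), h m k = (1 / μ k) * ∏ j ∈ Finset.range m, (β ((j : ℤ) + k) : ℂ))
    (Dn : (ℤ → ℂ) → ℤ → ℂ)
    (hDn : ∀ (f : ℤ → ℂ) (k : ℤ),
      Dn f k = (β (k + n) : ℂ) * f k - (β k : ℂ) * (μ (k + 1) / μ k) * f (k + 1))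
    (hN : ℕ → ℤ → ℂ)
    (hhN : ∀ (N : ℕ) (k : ℤ), hN N k = if |k| ≤ (N : ℤ) then h n k else 0)
    (hsum_neg : ∀ m : ℕ, 1 ≤ m → m ≤ n₀ →
      Summable (fun k : {k : ℤ // k < 0} => ‖h m k‖ ^ 2))
    (hsum : Summable (fun k : ℤ => ‖h (n + 1) k‖ ^ 2)) :
    (∀ N : ℕ,
      Dn (hN N) (N : ℤ) = h (n + 1) (N : ℤ) ∧
      Dn (hN N) (-(N : ℤ) - 1) = -h (n + 1) (-(N : ℤ) - 1) ∧
      ∀ k : ℤ, k ≠ (N : ℤ) → k ≠ -(N : ℤ) - 1 → Dn (hN N) k = 0) ∧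
    Tendsto (fun N : ℕ => ∑' k : ℤ, ‖Dn (hN N) k‖ ^ 2) atTop (nhds 0) := by
  -- key algebraic identities
  have key1 : ∀ k : ℤ, (β (k + n) : ℂ) * h n k = h (n + 1) k := by
    intro k
    rw [hh, hh, Finset.prod_range_succ]
    have : ((n : ℤ) + k) = k + n := by ring
    rw [this]
    ring
  have key2 : ∀ k : ℤ, (β k : ℂ) * (μ (k + 1) / μ k) * h n (k + 1) = h (n + 1) k := by
    intro k
    rw [hh, hh, Finset.prod_range_succ']
    have hprod : ∀ j ∈ Finset.range n,
        (β ((j : ℤ) + (k + 1)) : ℂ) = (β (((j : ℕ) + 1 : ℕ) + k) : ℂ) := by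
      intro j _
      congr 2
      push_cast
      ring
    rw [Finset.prod_congr rfl hprod]
    simp only [Nat.cast_zero, zero_add]
    generalize (∏ j ∈ Finset.range n, ((β (((j + 1 : ℕ) : ℤ) + k) : ℂ))) = P
    field_simp [hμ]
  -- pointwise description of Dn (hN N)
  have main : ∀ N : ℕ,
      Dn (hN N) (N : ℤ) = h (n + 1) (N : ℤ) ∧
      Dn (hN N) (-(N : ℤ) - 1) = -h (n + 1) (-(N : ℤ) - 1) ∧
      ∀ k : ℤ, k ≠ (N : ℤ) → k ≠ -(N : ℤ) - 1 → Dn (hN N) k = 0 := by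
    intro N
    refine ⟨?_, ?_, ?_⟩
    · rw [hDn, hhN, hhN]
      rw [if_pos (by simp), if_neg (by rw [abs_of_nonneg (by positivity)]; omega)]
      rw [mul_zero, sub_zero, key1]
    · rw [hDn, hhN, hhN]
      have hne : ¬ |(-(N : ℤ) - 1)| ≤ (N : ℤ) := by
        rw [abs_of_nonpos (by omega)]; omega
      rw [if_neg hne, if_pos (by rw [abs_of_nonpos (by omega)]; omega)]
      rw [mul_zero, zero_sub]
      rw [show (-(N : ℤ) - 1 + 1) = -(N : ℤ) - 1 + 1 from rfl, key2]
    · intro k hk1 hk2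
      rw [hDn, hhN, hhN]
      by_cases hk : |k| ≤ (N : ℤ)
      · have hk' : |k + 1| ≤ (N : ℤ) := by
          rcases abs_le.mp hk with ⟨h1, h2⟩
          rw [abs_le]
          constructor <;> omega
        rw [if_pos hk, if_pos hk', key1, key2, sub_self]
      · have hk' : ¬ |k + 1| ≤ (N : ℤ) := by
          rcases abs_le.not.mp hk with _
          rw [abs_le] at *
          omega
        rw [if_neg hk, if_neg hk', mul_zero, mul_zero, sub_zero]
  refine ⟨main, ?_⟩
  -- each tsum is a finite sum of two terms
  have htsum : ∀ N : ℕ, (∑' k : ℤ, ‖Dn (hN N) k‖ ^ 2) =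
      ‖h (n + 1) (N : ℤ)‖ ^ 2 + ‖h (n + 1) (-(N : ℤ) - 1)‖ ^ 2 := by
    intro N
    obtain ⟨e1, e2, e3⟩ := main N
    have hne : (N : ℤ) ≠ -(N : ℤ) - 1 := by omega
    rw [tsum_eq_sum (s := {(N : ℤ), -(N : ℤ) - 1})
      (by
        intro k hk
        simp only [Finset.mem_insert, Finset.mem_singleton, not_or] at hk
        rw [e3 k hk.1 hk.2]
        simp)]
    rw [Finset.sum_insert (by simpa using hne), Finset.sum_singleton, e1, e2]
    simp
  simp only [htsum]
  have hcof : Tendsto (fun k : ℤ => ‖h (n + 1) k‖ ^ 2) cofinite (nhds 0) :=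
    hsum.tendsto_cofinite_zero
  have hTop : Tendsto (fun N : ℕ => (N : ℤ)) atTop cofinite := by
    refine Tendsto.mono_right tendsto_natCast_atTop_atTop ?_
    rw [Int.cofinite_eq]
    exact le_sup_right
  have hBot : Tendsto (fun N : ℕ => -(N : ℤ) - 1) atTop cofinite := by
    have : Tendsto (fun N : ℕ => -(N : ℤ) - 1) atTop atBot := by
      apply tendsto_atBot_add_const_right
      exact tendsto_neg_atTop_atBot.comp
        (tendsto_natCast_atTop_atTop : Tendsto (fun N : ℕ => (N : ℤ)) atTop atTop)
    refine Tendsto.mono_right this ?_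
    rw [Int.cofinite_eq]
    exact le_sup_left
  have t1 := hcof.comp hTop
  have t2 := hcof.comp hBot
  have := t1.add t2
  simpa using this
end

section
/- Let β : ℤ → (0,∞) satisfy c₂(|k|+1) ≤ β(k) ≤ c₁(|k|+1) for positive constants c₁, c₂. For n ≥ 1 set h_n(k) = (1/μ(k))∏_{j=0}^{n−1}β(j+k) and h̃_n(k) = μ̄(k)∏_{j=0}^{n}(1/β(j+k)) (μ nonvanishing). Then ∑_{k≥0} |h_n(k)|·|h̃_n(k)| = ∑_{k≥0} 1/β(n+k) = ∞; consequently it is impossible that both ∑_{k≥0}|h_n(k)|² < ∞ and ∑_{k≥0}|h̃_n(k)|² < ∞. -/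
theorem kernels_not_both_square_summable (c₁ c₂ : ℝ) (hc₁ : 0 < c₁) (hc₂ : 0 < c₂)
    (β : ℤ → ℝ) (hβpos : ∀ k, 0 < β k)
    (hβ : ∀ k : ℤ, c₂ * ((|k| : ℤ) + 1) ≤ β k ∧ β k ≤ c₁ * ((|k| : ℤ) + 1))
    (μ : ℤ → ℂ) (hμ : ∀ k, μ k ≠ 0)
    (n : ℕ) (hn : 1 ≤ n)
    (h ht : ℤ → ℂ)
    (hh : ∀ k : ℤ, h k = (1 / μ k) * ∏ j ∈ Finset.range n, (β ((j : ℤ) + k) : ℂ))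
    (hht : ∀ k : ℤ, ht k = (starRingEnd ℂ) (μ k) * ∏ j ∈ Finset.range (n + 1), (1 / (β ((j : ℤ) + k) : ℂ))) :
    (∀ k : ℤ, 0 ≤ k → ‖h k‖ * ‖ht k‖ = 1 / β ((n : ℤ) + k)) ∧
    ¬ Summable (fun k : ℕ => 1 / β ((n : ℤ) + (k : ℤ))) ∧
    ¬ (Summable (fun k : ℕ => ‖h (k : ℤ)‖ ^ 2) ∧
       Summable (fun k : ℕ => ‖ht (k : ℤ)‖ ^ 2)) := by
  have key : ∀ k : ℤ, ‖h k‖ * ‖ht k‖ = 1 / β ((n : ℤ) + k) := by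
    intro k
    have hμabs : ‖μ k‖ ≠ 0 := by
      simpa using hμ k
    rw [hh k, hht k]
    rw [norm_mul, norm_mul, norm_prod, norm_prod, norm_div, norm_one, Complex.norm_conj]
    have habsβ : ∀ j : ℤ, ‖(β j : ℂ)‖ = β j := by
      intro j
      rw [Complex.norm_real, Real.norm_eq_abs, abs_of_pos (hβpos j)]
    have h1 : ∀ j ∈ Finset.range n, ‖(β ((j : ℤ) + k) : ℂ)‖ = β ((j : ℤ) + k) := by
      intro j _; exact habsβ _
    have h2 : ∀ j ∈ Finset.range (n+1),
        ‖1 / (β ((j : ℤ) + k) : ℂ)‖ = 1 / β ((j : ℤ) + k) := by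
      intro j _; rw [norm_div, norm_one, habsβ]
    rw [Finset.prod_congr rfl h1, Finset.prod_congr rfl h2]
    rw [Finset.prod_range_succ]
    have hpp : ∀ j ∈ Finset.range n, β ((j : ℤ) + k) ≠ 0 := fun j _ => (hβpos _).ne'
    field_simp
    rw [← Finset.prod_mul_distrib, Finset.prod_eq_one (fun j hj => mul_one_div_cancel (hpp j hj))]
  have notsum : ¬ Summable (fun k : ℕ => 1 / β ((n : ℤ) + (k : ℤ))) := by
    intro hs
    have hcomp : Summable (fun k : ℕ => 1 / (c₁ * ((n : ℝ) + k + 1))) := by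
      apply hs.of_nonneg_of_le
      · intro k
        positivity
      · intro k
        have hub := (hβ ((n : ℤ) + k)).2
        have habs : |(n : ℤ) + (k : ℤ)| = (n : ℤ) + k := abs_of_nonneg (by positivity)
        rw [habs] at hub
        have hub' : β ((n : ℤ) + k) ≤ c₁ * ((n : ℝ) + k + 1) := by
          push_cast at hub ⊢; linarith
        exact one_div_le_one_div_of_le (hβpos _) hub'
    have h2 : Summable (fun k : ℕ => 1 / ((n : ℝ) + k + 1)) := by
      have := hcomp.mul_left c₁
      refine this.congr (fun k => ?_)
      rw [mul_one_div, div_mul_eq_div_div, div_self hc₁.ne']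
    have h3 : Summable (fun k : ℕ => 1 / ((k : ℝ) + 1)) := by
      have h4 : Summable (fun k : ℕ => 1 / (((k + n : ℕ) : ℝ) + 1)) := by
        apply h2.congr
        intro k; push_cast; ring_nf
      exact (summable_nat_add_iff n).mp h4
    have h5 : ¬ Summable (fun k : ℕ => 1 / ((k : ℝ) + 1)) := by
      have := Real.not_summable_one_div_natCast
      intro hc
      exact this ((summable_nat_add_iff 1).mp (hc.congr (by intro k; push_cast; ring_nf)))
    exact h5 h3
  refine ⟨fun k _ => key k, notsum, ?_⟩
  rintro ⟨hs1, hs2⟩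
  apply notsum
  have hsum : Summable (fun k : ℕ =>
      (‖h (k : ℤ)‖ ^ 2 + ‖ht (k : ℤ)‖ ^ 2) / 2) :=
    (hs1.add hs2).div_const 2
  apply hsum.of_nonneg_of_le
  · intro k
    have := (hβpos ((n : ℤ) + k)).le
    positivity
  · intro k
    rw [← key (k : ℤ)]
    nlinarith [sq_nonneg (‖h (k : ℤ)‖ - ‖ht (k : ℤ)‖)]
end

section
/- Existence of implementations: let A be a C*-algebra, π : A → B(H) a representation with cyclic vector x₀, 𝒜 ⊆ A a dense subalgebra, and d : 𝒜 → A a derivation. There exists a linear operator D : π(𝒜)x₀ → H with [D, π(a)]x = π(d(a))x for all a ∈ 𝒜 and x ∈ π(𝒜)x₀ if and only if there exists z ∈ H such that π(a)x₀ = 0 implies π(d(a))x₀ = −π(a)z; moreover any such D satisfies D(π(a)x₀) = π(d(a))x₀ + π(a)·D(x₀). -/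
theorem implementation_exists_iff
    {A : Type*} [Ring A] [Algebra ℂ A]
    {H : Type*} [NormedAddCommGroup H] [InnerProductSpace ℂ H] [CompleteSpace H]
    (π : A →ₐ[ℂ] (H →L[ℂ] H)) (x₀ : H)
    (hcyc : Dense {y : H | ∃ a : A, π a x₀ = y})
    (𝒜 : Subalgebra ℂ A)
    (d : 𝒜 →ₗ[ℂ] A)
    (hd : ∀ a b : 𝒜, d (a * b) = d a * (b : A) + (a : A) * d b) :
    ((∃ D : H →ₗ[ℂ] H, ∀ (a b : 𝒜),
        D ((π a) ((π b) x₀)) - (π a) (D ((π b) x₀)) = (π (d a)) ((π b) x₀)) ↔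
      (∃ z : H, ∀ a : 𝒜, (π a) x₀ = 0 → (π (d a)) x₀ = -((π a) z))) ∧
    (∀ D : H →ₗ[ℂ] H,
      (∀ (a b : 𝒜),
        D ((π a) ((π b) x₀)) - (π a) (D ((π b) x₀)) = (π (d a)) ((π b) x₀)) →
      ∀ a : 𝒜, D ((π a) x₀) = (π (d a)) x₀ + (π a) (D x₀)) := by
  constructor
  · constructor
    · rintro ⟨D, hD⟩
      refine ⟨D x₀, fun a ha => ?_⟩
      have h := hD a 1
      simp only [OneMemClass.coe_one, map_one, ContinuousLinearMap.one_apply] at h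
      rw [ha, map_zero, zero_sub] at h
      exact h.symm
    · rintro ⟨z, hz⟩
      set g : 𝒜 →ₗ[ℂ] H :=
        { toFun := fun b => π b x₀
          map_add' := by intro a b; simp [map_add]
          map_smul' := by intro c b; simp } with hg
      set f : 𝒜 →ₗ[ℂ] H :=
        { toFun := fun b => π (d b) x₀ + π b z
          map_add' := by intro a b; simp [map_add]; abel
          map_smul' := by intro c b; simp [smul_add] } with hf
      have hker : LinearMap.ker g ≤ LinearMap.ker f := by
        intro b hb
        have hb' : π b x₀ = 0 := hb
        have := hz b hb'
        simp only [LinearMap.mem_ker, hf, LinearMap.coe_mk, AddHom.coe_mk, this]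
        abel
      set fbar := (LinearMap.ker g).liftQ f hker with hfbar
      set D₀ : LinearMap.range g →ₗ[ℂ] H :=
        fbar.comp (g.quotKerEquivRange.symm : LinearMap.range g →ₗ[ℂ] _) with hD₀
      obtain ⟨D, hDext⟩ := LinearMap.exists_extend D₀
      have key : ∀ b : 𝒜, D (g b) = f b := by
        intro b
        have h1 : (g b : H) = (LinearMap.range g).subtype (g.rangeRestrict b) := rfl
        rw [h1, ← LinearMap.comp_apply, hDext]
        show fbar ((g.quotKerEquivRange).symm (g.rangeRestrict b)) = f b
        have h2 : g.quotKerEquivRange (Submodule.Quotient.mk b) = g.rangeRestrict b := by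
          ext
          simp
        rw [← h2, LinearEquiv.symm_apply_apply]
        exact Submodule.liftQ_apply _ f b
      refine ⟨D, fun a b => ?_⟩
      have e1 : (π a) ((π b) x₀) = g (a * b) := by
        simp [hg, map_mul, ContinuousLinearMap.mul_apply]
      have e2 : (π b) x₀ = g b := rfl
      rw [e1, key (a * b), e2, key b]
      simp only [hf, LinearMap.coe_mk, AddHom.coe_mk, hd a b, map_add, map_mul,
        ContinuousLinearMap.add_apply, ContinuousLinearMap.mul_apply, MulMemClass.coe_mul]
      abel
  · intro D hD a
    have h := hD a 1
    simp only [OneMemClass.coe_one, map_one, ContinuousLinearMap.one_apply] at h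
    exact eq_add_of_sub_eq h
end
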